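/- Let u : {0,1}^m → ℝ be a monotone function and let s ∈ ℕ. Define u'(S) = min over T ⊆ S with |T| ≤ s of u(S \ T), define M = {S ⊆ [m] : u'(S) ≥ u'([m] \ S)}, and for sets write d(S, M) = min over T ∈ M of the size of the symmetric difference of S and T. Let A ⊆ [m] with complement A̅ = [m] \ A, and suppose u'(A) ≥ u'(A̅) and d(A̅, M) ≤ s. Then there exist R_1 ⊆ A and R_2 ⊆ A̅ with |R_1| ≤ 2s and |R_2| ≤ 2s such that u(A) ≥ u(A̅ \ R_2) and u(A̅) ≥ u(A \ R_1). -/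

import Mathlib

/-!
Let `R₂` realise the minimum in `u' Aᶜ`; then `u (Aᶜ \ R₂) = u' Aᶜ ≤ u' A ≤ u A`.
For the other inequality take `T ∈ M` within distance `s` of `Aᶜ` and let `R` realise the
minimum in `u' Tᶜ`. Removing `R₁ = A ∩ (T ∪ R)` from `A` lands inside `Tᶜ \ R`, and
`|A ∩ T| ≤ |Aᶜ ∆ T| ≤ s`, so `|R₁| ≤ 2s`. Since only the at most `s` elements of `T \ Aᶜ` must
be removed from `T` to get inside `Aᶜ`, monotonicity gives
`u (A \ R₁) ≤ u' Tᶜ ≤ u' T ≤ u (T ∩ Aᶜ) ≤ u Aᶜ`.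
-/

open scoped symmDiff

/-- `truncMin s u S = min_{T ⊆ S, |T| ≤ s} u (S \ T)`: the smallest value of `u` after
removing at most `s` elements from `S`. -/
noncomputable def truncMin {m : ℕ} (s : ℕ) (u : Finset (Fin m) → ℝ)
    (S : Finset (Fin m)) : ℝ :=
  (S.powerset.filter (fun T => T.card ≤ s)).inf'
    ⟨∅, Finset.mem_filter.mpr ⟨Finset.empty_mem_powerset S, by simp⟩⟩
    (fun T => u (S \ T))

section TruncMin

variable {m s : ℕ} {u : Finset (Fin m) → ℝ}

lemma truncMin_le_sdiff {S R : Finset (Fin m)} (hR : R ⊆ S) (hcard : R.card ≤ s) :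
    truncMin s u S ≤ u (S \ R) :=
  Finset.inf'_le _ (Finset.mem_filter.mpr ⟨Finset.mem_powerset.mpr hR, hcard⟩)

lemma exists_truncMin_eq (s : ℕ) (u : Finset (Fin m) → ℝ) (S : Finset (Fin m)) :
    ∃ R ⊆ S, R.card ≤ s ∧ truncMin s u S = u (S \ R) := by
  obtain ⟨R, hR, hval⟩ := Finset.exists_mem_eq_inf'
    (s := S.powerset.filter (·.card ≤ s)) ⟨∅, by simp⟩ (fun R => u (S \ R))
  rw [Finset.mem_filter, Finset.mem_powerset] at hR
  exact ⟨R, hR.1, hR.2, hval⟩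

lemma truncMin_le_self (S : Finset (Fin m)) : truncMin s u S ≤ u S := by
  simpa using truncMin_le_sdiff (u := u) (Finset.empty_subset S) (Nat.zero_le s)

lemma Monotone.truncMin_le_of_card_sdiff_le (hu : Monotone u) {S T : Finset (Fin m)}
    (hcard : (T \ S).card ≤ s) : truncMin s u T ≤ u S :=
  calc truncMin s u T ≤ u (T \ (T \ S)) := truncMin_le_sdiff Finset.sdiff_subset hcard
    _ ≤ u S := hu (sdiff_sdiff_right_self.trans_le inf_le_right)

lemma Monotone.exists_subset_card_le_sdiff_le_truncMin_compl (hu : Monotone u)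
    (A T : Finset (Fin m)) :
    ∃ R ⊆ A, R.card ≤ (A ∩ T).card + s ∧ u (A \ R) ≤ truncMin s u Tᶜ := by
  obtain ⟨R, -, hRcard, hR⟩ := exists_truncMin_eq s u Tᶜ
  refine ⟨A ∩ (T ∪ R), Finset.inter_subset_left, ?_, hR ▸ hu ?_⟩
  · calc (A ∩ (T ∪ R)).card ≤ (A ∩ T ∪ R).card := by
          gcongr; rw [Finset.inter_union_distrib_left]; gcongr; exact Finset.inter_subset_right
      _ ≤ (A ∩ T).card + s := (Finset.card_union_le _ _).trans (by omega)
  · intro x hx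
    simp only [Finset.mem_sdiff, Finset.mem_inter, Finset.mem_union, not_and, not_or] at hx
    simpa using hx.2 hx.1

end TruncMin

/-- Let `u` be monotone, `s ∈ ℕ`, `u' = truncMin s u`, and
`M = {S : u' S ≥ u' Sᶜ}`. If `A` satisfies `u' A ≥ u' Aᶜ` and `d(Aᶜ, M) ≤ s`
(i.e., some `T ∈ M` has Hamming distance at most `s` from `Aᶜ`), then there are
`R₁ ⊆ A` and `R₂ ⊆ Aᶜ` of size at most `2 s` with `u A ≥ u (Aᶜ \ R₂)` and
`u Aᶜ ≥ u (A \ R₁)`. -/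
theorem consensus_halving_from_distance_to_valid_sets (m s : ℕ)
    (u : Finset (Fin m) → ℝ)
    (hu : ∀ S T : Finset (Fin m), S ⊆ T → u S ≤ u T)
    (A : Finset (Fin m))
    (hA : truncMin s u A ≥ truncMin s u Aᶜ)
    (hdist : ∃ T : Finset (Fin m),
      truncMin s u T ≥ truncMin s u Tᶜ ∧ (Aᶜ ∆ T).card ≤ s) :
    ∃ R₁ R₂ : Finset (Fin m), R₁ ⊆ A ∧ R₂ ⊆ Aᶜ ∧ R₁.card ≤ 2 * s ∧ R₂.card ≤ 2 * s ∧
      u A ≥ u (Aᶜ \ R₂) ∧ u Aᶜ ≥ u (A \ R₁) := by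
  have hmono : Monotone u := fun S T h => hu S T h
  obtain ⟨T, hT, hTdist⟩ := hdist
  have hTA : (T \ Aᶜ).card ≤ s :=
    (Finset.card_le_card (symmDiff_def Aᶜ T ▸ le_sup_right)).trans hTdist
  obtain ⟨R₂, hR₂A, hR₂card, hR₂⟩ := exists_truncMin_eq s u Aᶜ
  obtain ⟨R₁, hR₁A, hR₁card, hR₁⟩ :=
    hmono.exists_subset_card_le_sdiff_le_truncMin_compl (s := s) A T
  have hAT : (A ∩ T).card ≤ s := by
    rwa [Finset.inter_comm, ← Finset.inf_eq_inter, ← sdiff_compl]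
  refine ⟨R₁, R₂, hR₁A, hR₂A, by omega, by omega, ?_, ?_⟩
  · rw [← hR₂]
    exact hA.trans (truncMin_le_self A)
  · exact hR₁.trans (hT.trans (hmono.truncMin_le_of_card_sdiff_le hTA))
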